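/- Let m1, m2 be positive integers with m2 even and g = gcd(m1,m2). Then the node set LS(m) = {x_i : i ∈ I(m)} equals the union over ρ = 0,…,g−1 of the sample sets {ℓ_{2ρ/m2}(lπ/(m1m2)) : 0 ≤ l < 2m1m2/g}, where ℓ_α(t) = (sin(m2 t)cos(m1 t − απ), sin(m2 t)sin(m1 t − απ), cos(m2 t)). In particular, if gcd(m1,m2) = 1 then LS(m) is the set of samples ℓ_0(lπ/(m1m2)), 0 ≤ l < 2m1m2. -/

import Mathlib

/-!
Both sets consist of the points `V(a, b)` with polar angle `aπ/m1` and azimuth `bπ/m2`, where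
`a, b` range over the integers with `a + b` even. The index set `I(m)` is a fundamental domain
for the symmetries `a ↦ a + 2m1`, `b ↦ b + 2m2`, `(a, b) ↦ (-a, b + m2)` of `V` (and `b ↦ b + m2`
at the poles), which preserve the parity of `a + b` because `m2` is even. The sample
`ℓ_{2ρ/m2}(lπ/(m1m2))` is `V(l, l - 2ρ)`; conversely, Bézout's identity `g = A m1 + B m2` solves
`l ≡ a (mod 2m1)`, `l - 2ρ ≡ b (mod 2m2)` with `0 ≤ ρ < g`, and only `l mod 2 lcm(m1, m2)`
matters, where `2 lcm(m1, m2) = 2m1m2/g`.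
-/

open Real

noncomputable def lissajous (m1 m2 : ℕ) (α : ℝ) (t : ℝ) : ℝ × ℝ × ℝ :=
  (Real.sin (m2 * t) * Real.cos (m1 * t - α * π),
   Real.sin (m2 * t) * Real.sin (m1 * t - α * π),
   Real.cos (m2 * t))

/-- The index set I(m) as a finset. -/
def indexSet (m1 m2 : ℕ) : Finset (ℕ × ℕ) :=
  (Finset.range (m1 + 1) ×ˢ Finset.range (2 * m2)).filter
    (fun i => ((i.1 = 0 ∨ i.1 = m1) → i.2 < m2) ∧ Even (i.1 + i.2))

/-- The spherical Lissajous node corresponding to an index. -/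
noncomputable def node (m1 m2 : ℕ) (i : ℕ × ℕ) : ℝ × ℝ × ℝ :=
  (Real.sin (i.1 * π / m1) * Real.cos (i.2 * π / m2),
   Real.sin (i.1 * π / m1) * Real.sin (i.2 * π / m2),
   Real.cos (i.1 * π / m1))

noncomputable def sphericalPoint (θ φ : ℝ) : ℝ × ℝ × ℝ :=
  (sin θ * cos φ, sin θ * sin φ, cos θ)

theorem sphericalPoint_add_int_mul_two_pi (θ φ : ℝ) (j k : ℤ) :
    sphericalPoint (θ + j * (2 * π)) (φ + k * (2 * π)) = sphericalPoint θ φ := by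
  simp only [sphericalPoint, sin_add_int_mul_two_pi, cos_add_int_mul_two_pi]

theorem sphericalPoint_neg_add_pi (θ φ : ℝ) :
    sphericalPoint (-θ) (φ + π) = sphericalPoint θ φ := by
  simp only [sphericalPoint, sin_neg, cos_neg, sin_add_pi, cos_add_pi, neg_mul_neg]

theorem sphericalPoint_eq_of_sin_eq_zero {θ : ℝ} (h : sin θ = 0) (φ φ' : ℝ) :
    sphericalPoint θ φ = sphericalPoint θ φ' := by
  simp only [sphericalPoint, h, zero_mul]

noncomputable def gridPoint (m1 m2 : ℕ) (a b : ℤ) : ℝ × ℝ × ℝ :=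
  sphericalPoint (a * π / m1) (b * π / m2)

section gridPoint

variable {m1 m2 : ℕ}

theorem int_add_two_mul_mul_pi_div {m : ℕ} (hm : m ≠ 0) (a j : ℤ) :
    ((a + 2 * m * j : ℤ) : ℝ) * π / m = a * π / m + j * (2 * π) := by
  push_cast
  field_simp

theorem gridPoint_congr (hm1 : m1 ≠ 0) (hm2 : m2 ≠ 0) {a a' b b' : ℤ}
    (ha : a ≡ a' [ZMOD 2 * m1]) (hb : b ≡ b' [ZMOD 2 * m2]) :
    gridPoint m1 m2 a b = gridPoint m1 m2 a' b' := by
  obtain ⟨j, hj⟩ := ha.dvd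
  obtain ⟨k, hk⟩ := hb.dvd
  rw [eq_add_of_sub_eq' hj, eq_add_of_sub_eq' hk, gridPoint, gridPoint,
    int_add_two_mul_mul_pi_div hm1, int_add_two_mul_mul_pi_div hm2,
    sphericalPoint_add_int_mul_two_pi]

theorem gridPoint_neg_add (hm2 : m2 ≠ 0) (a b : ℤ) :
    gridPoint m1 m2 (-a) (b + m2) = gridPoint m1 m2 a b := by
  have hb : ((b + m2 : ℤ) : ℝ) * π / m2 = b * π / m2 + π := by
    push_cast
    field_simp
  rw [gridPoint, hb, Int.cast_neg, neg_mul, neg_div, sphericalPoint_neg_add_pi, gridPoint]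

theorem gridPoint_eq_of_dvd (hm1 : m1 ≠ 0) {a : ℤ} (ha : (m1 : ℤ) ∣ a) (b b' : ℤ) :
    gridPoint m1 m2 a b = gridPoint m1 m2 a b' := by
  obtain ⟨k, rfl⟩ := ha
  refine sphericalPoint_eq_of_sin_eq_zero ?_ _ _
  rw [show ((m1 * k : ℤ) : ℝ) * π / m1 = k * π by push_cast; field_simp]
  exact sin_int_mul_pi k

theorem node_eq_gridPoint (i : ℕ × ℕ) : node m1 m2 i = gridPoint m1 m2 i.1 i.2 := by
  simp [node, gridPoint, sphericalPoint]

theorem lissajous_eq_gridPoint (hm1 : m1 ≠ 0) (hm2 : m2 ≠ 0) (ρ l : ℕ) :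
    lissajous m1 m2 (2 * (ρ : ℝ) / m2) ((l : ℝ) * π / (m1 * m2))
      = gridPoint m1 m2 l (l - 2 * ρ) := by
  have hpolar : (m2 : ℝ) * ((l : ℝ) * π / (m1 * m2)) = ((l : ℤ) : ℝ) * π / m1 := by
    push_cast
    field_simp
  have hazimuth : (m1 : ℝ) * ((l : ℝ) * π / (m1 * m2)) - 2 * (ρ : ℝ) / m2 * π
      = ((l - 2 * ρ : ℤ) : ℝ) * π / m2 := by
    push_cast
    field_simp
  rw [lissajous, hpolar, hazimuth]
  rfl

end gridPoint

def evenGridPoints (m1 m2 : ℕ) : Set (ℝ × ℝ × ℝ) :=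
  {x | ∃ a b : ℤ, Even (a + b) ∧ x = gridPoint m1 m2 a b}

section reduction

variable {m1 m2 : ℕ}

theorem exists_gridPoint_eq_of_polar_le (hm1 : m1 ≠ 0) (hm2 : m2 ≠ 0) (heven : Even m2)
    (a b : ℤ) (hab : Even (a + b)) :
    ∃ a' b' : ℤ, 0 ≤ a' ∧ a' ≤ m1 ∧ Even (a' + b') ∧ gridPoint m1 m2 a b = gridPoint m1 m2 a' b' := by
  have hr0 : 0 ≤ a % (2 * m1) := Int.emod_nonneg _ (by positivity)
  have hr : a % (2 * m1) < 2 * m1 := Int.emod_lt_of_pos _ (by positivity)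
  have hpar : a % (2 * m1) % 2 = a % 2 := Int.emod_emod_of_dvd _ (dvd_mul_right 2 _)
  have hm2par : (m2 : ℤ) % 2 = 0 := by exact_mod_cast Nat.even_iff.mp heven
  rw [Int.even_iff] at hab
  have hred : gridPoint m1 m2 a b = gridPoint m1 m2 (a % (2 * m1)) b :=
    gridPoint_congr hm1 hm2 (Int.mod_modEq a _).symm rfl
  by_cases hle : a % (2 * m1) ≤ m1
  · exact ⟨a % (2 * m1), b, hr0, hle, Int.even_iff.mpr (by omega), hred⟩
  · -- a polar angle `θ ∈ (π, 2π)` gives the same point as `2π - θ` with the azimuth turned by `π`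
    refine ⟨2 * m1 - a % (2 * m1), b - m2, by omega, by omega, Int.even_iff.mpr (by omega), ?_⟩
    rw [hred, ← gridPoint_neg_add hm2 (2 * m1 - _) (b - m2), sub_add_cancel]
    exact gridPoint_congr hm1 hm2 (Int.modEq_iff_dvd.mpr ⟨-1, by ring⟩) rfl

theorem toNat_mem_indexSet {a b : ℤ} (ha0 : 0 ≤ a) (ha : a ≤ m1) (hb0 : 0 ≤ b)
    (hb : b < 2 * m2) (hpole : a = 0 ∨ a = m1 → b < m2) (hab : Even (a + b)) :
    (a.toNat, b.toNat) ∈ indexSet m1 m2 := by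
  rw [Int.even_iff] at hab
  simp only [indexSet, Finset.mem_filter, Finset.mem_product, Finset.mem_range, Nat.even_iff]
  omega

theorem exists_mem_indexSet_of_polar_le (hm1 : m1 ≠ 0) (hm2 : m2 ≠ 0) (heven : Even m2)
    {a b : ℤ} (ha0 : 0 ≤ a) (ha : a ≤ m1) (hab : Even (a + b)) :
    ∃ i ∈ indexSet m1 m2, gridPoint m1 m2 a b = node m1 m2 i := by
  have h2 : (2 : ℤ) ∣ m2 := by exact_mod_cast even_iff_two_dvd.mp heven
  rw [Int.even_iff] at hab
  by_cases hpole : a = 0 ∨ a = m1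
  · have hb0 : 0 ≤ b % m2 := Int.emod_nonneg _ (by positivity)
    have hb : b % m2 < m2 := Int.emod_lt_of_pos _ (by positivity)
    have hpar : b % m2 % 2 = b % 2 := Int.emod_emod_of_dvd _ h2
    refine ⟨_, toNat_mem_indexSet ha0 ha hb0 (by omega) (fun _ => hb)
      (Int.even_iff.mpr (by omega)), ?_⟩
    have hdvd : (m1 : ℤ) ∣ a := by rcases hpole with rfl | rfl <;> simp
    rw [node_eq_gridPoint, Int.toNat_of_nonneg ha0, Int.toNat_of_nonneg hb0]
    exact gridPoint_eq_of_dvd hm1 hdvd _ _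
  · have hb0 : 0 ≤ b % (2 * m2) := Int.emod_nonneg _ (by positivity)
    have hb : b % (2 * m2) < 2 * m2 := Int.emod_lt_of_pos _ (by positivity)
    have hpar : b % (2 * m2) % 2 = b % 2 := Int.emod_emod_of_dvd _ (dvd_mul_right 2 _)
    refine ⟨_, toNat_mem_indexSet ha0 ha hb0 hb (fun h => absurd h hpole)
      (Int.even_iff.mpr (by omega)), ?_⟩
    rw [node_eq_gridPoint, Int.toNat_of_nonneg ha0, Int.toNat_of_nonneg hb0]
    exact gridPoint_congr hm1 hm2 rfl (Int.mod_modEq b _).symm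

theorem nodes_eq_evenGridPoints (hm1 : m1 ≠ 0) (hm2 : m2 ≠ 0) (heven : Even m2) :
    {x : ℝ × ℝ × ℝ | ∃ i ∈ indexSet m1 m2, x = node m1 m2 i} = evenGridPoints m1 m2 := by
  ext x
  constructor
  · rintro ⟨i, hi, rfl⟩
    have hpar := (Finset.mem_filter.mp hi).2.2
    exact ⟨i.1, i.2, by exact_mod_cast hpar, node_eq_gridPoint i⟩
  · rintro ⟨a, b, hab, rfl⟩
    obtain ⟨a', b', ha0, ha, hab', hred⟩ := exists_gridPoint_eq_of_polar_le hm1 hm2 heven a b hab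
    obtain ⟨i, hi, hnode⟩ := exists_mem_indexSet_of_polar_le hm1 hm2 heven ha0 ha hab'
    exact ⟨i, hi, hred.trans hnode⟩

end reduction

section sampling

variable {m1 m2 : ℕ}

theorem exists_shift_modEq (hm1 : m1 ≠ 0) {a b : ℤ} (hab : Even (a + b)) :
    ∃ ρ l : ℤ, 0 ≤ ρ ∧ ρ < Nat.gcd m1 m2 ∧
      a ≡ l [ZMOD 2 * m1] ∧ b ≡ l - 2 * ρ [ZMOD 2 * m2] := by
  obtain ⟨s, hs⟩ : ∃ s, a - b = 2 * s := ⟨(a - b) / 2, by rw [Int.even_iff] at hab; omega⟩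
  set g : ℤ := (Nat.gcd m1 m2 : ℤ)
  have hg : 0 < g := Int.natCast_pos.mpr (Nat.gcd_pos_of_pos_left m2 (Nat.pos_of_ne_zero hm1))
  have hbezout : g = m1 * Nat.gcdA m1 m2 + m2 * Nat.gcdB m1 m2 := Nat.gcd_eq_gcd_ab m1 m2
  -- with `s = ρ + g q`, the shift `2 m1 A q` in `l` moves `l - 2ρ - b` to `2 m2 B q`
  refine ⟨s % g, a - 2 * m1 * (Nat.gcdA m1 m2 * (s / g)), Int.emod_nonneg _ hg.ne',
    Int.emod_lt_of_pos _ hg, Int.modEq_iff_dvd.mpr ⟨-(Nat.gcdA m1 m2 * (s / g)), by ring⟩,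
    Int.modEq_iff_dvd.mpr ⟨Nat.gcdB m1 m2 * (s / g), ?_⟩⟩
  linear_combination hs - 2 * Int.emod_add_mul_ediv s g + 2 * (s / g) * hbezout

theorem two_mul_lcm_eq : 2 * m1 * m2 / Nat.gcd m1 m2 = 2 * Nat.lcm m1 m2 := by
  rw [mul_assoc, Nat.mul_div_assoc _ ((Nat.gcd_dvd_left m1 m2).mul_right m2), Nat.lcm]

theorem exists_lissajous_eq_gridPoint (hm1 : m1 ≠ 0) (hm2 : m2 ≠ 0) {a b : ℤ}
    (hab : Even (a + b)) :
    ∃ ρ < Nat.gcd m1 m2, ∃ l < 2 * m1 * m2 / Nat.gcd m1 m2,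
      gridPoint m1 m2 a b = lissajous m1 m2 (2 * (ρ : ℝ) / m2) ((l : ℝ) * π / (m1 * m2)) := by
  obtain ⟨ρ, l, hρ0, hρ, ha, hb⟩ := exists_shift_modEq (m2 := m2) hm1 hab
  set N : ℤ := 2 * Nat.lcm m1 m2
  have hN : 0 < N := by positivity
  have hl0 : 0 ≤ l % N := Int.emod_nonneg _ hN.ne'
  have hlN : l % N < N := Int.emod_lt_of_pos _ hN
  have hl1 : l ≡ l % N [ZMOD 2 * m1] :=
    (Int.mod_modEq l N).symm.of_dvd (mul_dvd_mul_left 2 (by exact_mod_cast Nat.dvd_lcm_left m1 m2))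
  have hl2 : l ≡ l % N [ZMOD 2 * m2] :=
    (Int.mod_modEq l N).symm.of_dvd (mul_dvd_mul_left 2 (by exact_mod_cast Nat.dvd_lcm_right m1 m2))
  refine ⟨ρ.toNat, by omega, (l % N).toNat, by rw [two_mul_lcm_eq]; omega, ?_⟩
  rw [lissajous_eq_gridPoint hm1 hm2, Int.toNat_of_nonneg hρ0, Int.toNat_of_nonneg hl0]
  exact gridPoint_congr hm1 hm2 (ha.trans hl1) (hb.trans (hl2.sub_right _))

theorem lissajousSamples_eq_evenGridPoints (hm1 : m1 ≠ 0) (hm2 : m2 ≠ 0) :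
    {x : ℝ × ℝ × ℝ | ∃ ρ < Nat.gcd m1 m2, ∃ l < 2 * m1 * m2 / Nat.gcd m1 m2,
      x = lissajous m1 m2 (2 * (ρ : ℝ) / m2) ((l : ℝ) * π / (m1 * m2))} =
      evenGridPoints m1 m2 := by
  ext x
  constructor
  · rintro ⟨ρ, -, l, -, rfl⟩
    exact ⟨l, l - 2 * ρ, ⟨l - ρ, by ring⟩, lissajous_eq_gridPoint hm1 hm2 ρ l⟩
  · rintro ⟨a, b, hab, rfl⟩
    exact exists_lissajous_eq_gridPoint hm1 hm2 hab

end sampling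

theorem stmt9 (m1 m2 : ℕ) (hm1 : 0 < m1) (hm2 : 0 < m2) (heven : Even m2)
    (g : ℕ) (hg : g = Nat.gcd m1 m2) :
    ({x : ℝ × ℝ × ℝ | ∃ i ∈ indexSet m1 m2, x = node m1 m2 i} =
      {x : ℝ × ℝ × ℝ | ∃ ρ < g, ∃ l < 2 * m1 * m2 / g,
        x = lissajous m1 m2 (2 * (ρ:ℝ) / m2) ((l : ℝ) * π / (m1 * m2))}) ∧
    (Nat.gcd m1 m2 = 1 →
      {x : ℝ × ℝ × ℝ | ∃ i ∈ indexSet m1 m2, x = node m1 m2 i} =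
        {x : ℝ × ℝ × ℝ | ∃ l < 2 * m1 * m2,
          x = lissajous m1 m2 0 ((l : ℝ) * π / (m1 * m2))}) := by
  subst hg
  have hnodes := (nodes_eq_evenGridPoints hm1.ne' hm2.ne' heven).trans
    (lissajousSamples_eq_evenGridPoints hm1.ne' hm2.ne').symm
  refine ⟨hnodes, fun hcoprime => ?_⟩
  rw [hnodes, hcoprime]
  simp only [Nat.lt_one_iff, exists_eq_left, Nat.div_one, Nat.cast_zero, mul_zero, zero_div]
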